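/- arXiv:2310.01439 — 2 statements merged into one kernel-verified Lean document; each statement's English description precedes it below -/
import Mathlib

section
/- Let H be a finite nonempty set, let φ : H → ℝ be any function, and let p and q be probability distributions on H with q absolutely continuous with respect to p (i.e., p(h) > 0 whenever q(h) > 0). Then Σ_{h∈H} q(h)·φ(h) − log( Σ_{h∈H} p(h)·exp(φ(h)) ) ≤ KL(q ‖ p). -/
/-!
Put `Z = ∑ p h * exp (φ h)`, so that `r h = p h * exp (φ h) / Z` sums to one. On the support of `q`,
`φ h - log Z - log (q h / p h) = log (r h / q h)`, and `log x ≤ x - 1` bounds `q h` times it by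
`r h - q h`; off the support both sides are trivially ordered. Summing over `h` gives
`∑ q φ - log Z - KL(q ‖ p) ≤ ∑ r - ∑ q = 0`.
-/

open Real Finset

lemma mul_sub_log_div_le_mul_exp_sub {p q : ℝ} (hp : 0 ≤ p) (hq : 0 ≤ q) (habs : 0 < q → 0 < p)
    (a : ℝ) : q * (a - log (q / p)) ≤ p * exp a - q := by
  rcases hq.eq_or_lt with rfl | hq
  · simpa using mul_nonneg hp (exp_pos a).le
  have hp := habs hq
  have hlog : a - log (q / p) = log (p * exp a / q) := by
    rw [log_div (by positivity) hq.ne', log_mul hp.ne' (exp_ne_zero a), log_exp,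
      log_div hq.ne' hp.ne']
    ring
  calc q * (a - log (q / p)) ≤ q * (p * exp a / q - 1) := by
        rw [hlog]
        exact mul_le_mul_of_nonneg_left (log_le_sub_one_of_pos (by positivity)) hq.le
    _ = p * exp a - q := by field_simp

lemma sum_mul_exp_pos {H : Type*} [Fintype H] {p q : H → ℝ} (φ : H → ℝ) (hp : ∀ h, 0 ≤ p h)
    (hq_sum : ∑ h, q h = 1) (habs : ∀ h, 0 < q h → 0 < p h) :
    0 < ∑ h, p h * exp (φ h) := by
  obtain ⟨h₀, -, hq₀⟩ : ∃ h ∈ univ, 0 < q h := by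
    by_contra! hle
    linarith [sum_nonpos hle]
  exact sum_pos' (fun h _ => mul_nonneg (hp h) (exp_pos _).le)
    ⟨h₀, mem_univ _, mul_pos (habs h₀ hq₀) (exp_pos _)⟩

theorem compression_lemma_general
    {H : Type*} [Fintype H]
    (φ : H → ℝ) (p q : H → ℝ)
    (hp_nonneg : ∀ h, 0 ≤ p h)
    (hq_nonneg : ∀ h, 0 ≤ q h) (hq_sum : ∑ h, q h = 1)
    (habs : ∀ h, 0 < q h → 0 < p h) :
    (∑ h, q h * φ h) - Real.log (∑ h, p h * Real.exp (φ h))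
      ≤ ∑ h, q h * Real.log (q h / p h) := by
  set Z := ∑ h, p h * exp (φ h)
  have hZ : 0 < Z := sum_mul_exp_pos φ hp_nonneg hq_sum habs
  have hpointwise := sum_le_sum fun h (_ : h ∈ univ) =>
    mul_sub_log_div_le_mul_exp_sub (hp_nonneg h) (hq_nonneg h) (habs h) (φ h - log Z)
  have hgibbs : ∑ h, p h * exp (φ h - log Z) = 1 := by
    simp_rw [exp_sub, exp_log hZ, mul_div_assoc', ← sum_div]
    exact div_self hZ.ne'
  simp only [mul_sub, sum_sub_distrib, ← sum_mul, hq_sum, hgibbs] at hpointwise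
  linarith

/-- Compression lemma (Banerjee): for probability distributions `q` and `p` on a
finite nonempty set `H` with `q` absolutely continuous w.r.t. `p`, and any
`φ : H → ℝ`, we have `E_q[φ] - log E_p[exp φ] ≤ KL(q ‖ p)`. -/
theorem compression_lemma
    {H : Type*} [Fintype H] [Nonempty H]
    (φ : H → ℝ) (p q : H → ℝ)
    (hp_nonneg : ∀ h, 0 ≤ p h) (hp_sum : ∑ h, p h = 1)
    (hq_nonneg : ∀ h, 0 ≤ q h) (hq_sum : ∑ h, q h = 1)
    (habs : ∀ h, 0 < q h → 0 < p h) :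
    (∑ h, q h * φ h) - Real.log (∑ h, p h * Real.exp (φ h))
      ≤ ∑ h, q h * Real.log (q h / p h) :=
  compression_lemma_general φ p q hp_nonneg hq_nonneg hq_sum habs
end

section
/- Let K be a finite nonempty set, let η > 0 and B ≥ 0, let ℓ : K → ℝ satisfy 0 ≤ ℓ(k) ≤ B for all k ∈ K, and let p and q be probability distributions on K with q absolutely continuous with respect to p. Then Σ_{k∈K} p(k)·ℓ(k) ≤ Σ_{k∈K} q(k)·ℓ(k) + (1/η)·KL(q ‖ p) + η·B²/8. -/
/-!
Donsker–Varadhan duality (the compression lemma) bounds `E_q[φ]` by `KL(q ‖ p) + log E_p[exp φ]`;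
for `φ = -η ℓ`, Hoeffding's lemma bounds the log-moment-generating function of the loss under `p`
by `-η E_p[ℓ] + η² B² / 8`. Dividing by `η` gives the regret bound.
-/

open Real Finset MeasureTheory ProbabilityTheory

namespace MeasureTheory.Measure

variable {K : Type*} [Fintype K] [MeasurableSpace K]

noncomputable def ofWeights (p : K → ℝ) : Measure K :=
  ∑ k, (p k).toNNReal • dirac k

theorem isProbabilityMeasure_ofWeights {p : K → ℝ} (hp : ∀ k, 0 ≤ p k) (hsum : ∑ k, p k = 1) :
    IsProbabilityMeasure (ofWeights p) := by
  constructor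
  simp only [ofWeights, coe_finsetSum, Finset.sum_apply, smul_apply, measure_univ,
    ENNReal.smul_def, smul_eq_mul, mul_one]
  rw [← ENNReal.ofNNReal_finsetSum, ← Real.toNNReal_sum_of_nonneg fun k _ => hp k, hsum]
  simp

theorem integral_ofWeights [MeasurableSingletonClass K] {p : K → ℝ} (hp : ∀ k, 0 ≤ p k)
    (f : K → ℝ) : ∫ k, f k ∂(ofWeights p) = ∑ k, p k * f k := by
  rw [ofWeights, integral_finsetSum_measure fun k _ => .of_finite]
  simp [NNReal.smul_def, Real.coe_toNNReal _ (hp _)]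

end MeasureTheory.Measure

/-- Hoeffding's lemma for a finitely supported distribution. -/
theorem log_sum_mul_exp_le_of_mem_Icc {K : Type*} [Fintype K] {p X : K → ℝ}
    (hp : ∀ k, 0 ≤ p k) (hsum : ∑ k, p k = 1) {a b : ℝ} (hX : ∀ k, X k ∈ Set.Icc a b) (t : ℝ) :
    log (∑ k, p k * exp (t * X k)) ≤ t * ∑ k, p k * X k + t ^ 2 * (b - a) ^ 2 / 8 := by
  let : MeasurableSpace K := ⊤
  have : DiscreteMeasurableSpace K := ⟨fun _ => trivial⟩
  set μ := Measure.ofWeights p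
  have : IsProbabilityMeasure μ := Measure.isProbabilityMeasure_ofWeights hp hsum
  have hmean : μ[X] = ∑ k, p k * X k := Measure.integral_ofWeights hp X
  have hmgf : mgf X μ t = ∑ k, p k * exp (t * X k) := Measure.integral_ofWeights hp _
  have hcentered := (hasSubgaussianMGF_of_mem_Icc (measurable_of_countable X).aemeasurable
    (ae_of_all μ hX)).cgf_le t
  have hshift : mgf X μ t = mgf (fun k => X k - μ[X]) μ t * exp (t * μ[X]) := by
    rw [← mgf_add_const]; simp
  have hvar : (((‖b - a‖₊ / 2) ^ 2 : NNReal) : ℝ) * t ^ 2 / 2 = t ^ 2 * (b - a) ^ 2 / 8 := by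
    push_cast; rw [Real.norm_eq_abs, div_pow, sq_abs]; ring
  rw [cgf, hvar] at hcentered
  rw [← hmgf, ← hmean, hshift, log_mul (mgf_pos .of_finite).ne' (exp_pos _).ne', log_exp]
  linarith

/-- The Fenchel–Young inequality for `x ↦ x log x` and `exp`. -/
theorem mul_le_mul_log_div_add_mul_exp_sub {p q : ℝ} (hp : 0 ≤ p) (hq : 0 ≤ q)
    (hpq : 0 < q → 0 < p) (φ : ℝ) : q * φ ≤ q * log (q / p) + p * exp φ - q := by
  rcases hq.eq_or_lt with rfl | hq
  · simp only [zero_mul, zero_add, sub_zero]; positivity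
  have hp := hpq hq
  have hlog := log_le_sub_one_of_pos (by positivity : 0 < p * exp φ / q)
  rw [log_div (by positivity) hq.ne', log_mul hp.ne' (exp_pos φ).ne', log_exp] at hlog
  rw [log_div hq.ne' hp.ne']
  have := mul_le_mul_of_nonneg_left hlog hq.le
  rw [mul_sub_one, mul_div_cancel₀ _ hq.ne'] at this
  linarith

/-- The compression lemma (Donsker–Varadhan) on a finite set. -/
theorem sum_mul_le_sum_mul_log_div_add_log_sum_mul_exp {K : Type*} [Fintype K] {p q : K → ℝ}
    (hp : ∀ k, 0 ≤ p k) (hq : ∀ k, 0 ≤ q k) (hq_sum : ∑ k, q k = 1)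
    (hqp : ∀ k, 0 < q k → 0 < p k) (φ : K → ℝ) :
    ∑ k, q k * φ k ≤ ∑ k, q k * log (q k / p k) + log (∑ k, p k * exp (φ k)) := by
  set Z := ∑ k, p k * exp (φ k)
  have hZ : 0 < Z := by
    obtain ⟨k, hk⟩ : ∃ k, 0 < q k := by
      by_contra! h
      linarith [sum_nonpos fun k (_ : k ∈ univ) => h k]
    exact sum_pos' (fun k _ => mul_nonneg (hp k) (exp_pos _).le)
      ⟨k, mem_univ k, mul_pos (hqp k hk) (exp_pos _)⟩
  -- Fenchel–Young applied to the shifted potential `φ - log Z`, for which `E_p[exp] = 1`.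
  have hshifted := sum_le_sum fun k (_ : k ∈ univ) =>
    mul_le_mul_log_div_add_mul_exp_sub (hp k) (hq k) (hqp k) (φ k - log Z)
  simp only [exp_sub, exp_log hZ, mul_sub, sum_sub_distrib, sum_add_distrib, ← sum_mul, hq_sum,
    mul_div_assoc', ← sum_div] at hshifted
  rw [div_self hZ.ne'] at hshifted
  linarith

theorem single_step_regret_bound_general
    {K : Type*} [Fintype K]
    (η B : ℝ) (hη : 0 < η)
    (ℓ : K → ℝ) (hℓ : ∀ k, 0 ≤ ℓ k ∧ ℓ k ≤ B)
    (p q : K → ℝ)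
    (hp_nonneg : ∀ k, 0 ≤ p k) (hp_sum : ∑ k, p k = 1)
    (hq_nonneg : ∀ k, 0 ≤ q k) (hq_sum : ∑ k, q k = 1)
    (habs : ∀ k, 0 < q k → 0 < p k) :
    (∑ k, p k * ℓ k)
      ≤ (∑ k, q k * ℓ k) + (1 / η) * (∑ k, q k * Real.log (q k / p k))
        + η * B ^ 2 / 8 := by
  set KL := ∑ k, q k * log (q k / p k)
  have hcompression := sum_mul_le_sum_mul_log_div_add_log_sum_mul_exp hp_nonneg hq_nonneg hq_sum
    habs fun k => -η * ℓ k
  have hhoeffding := log_sum_mul_exp_le_of_mem_Icc hp_nonneg hp_sum hℓ (-η)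
  simp only [mul_left_comm _ (-η), ← mul_sum, sub_zero, neg_sq] at hcompression hhoeffding
  have hscaled : η * ∑ k, p k * ℓ k ≤ η * (∑ k, q k * ℓ k + 1 / η * KL + η * B ^ 2 / 8) := by
    rw [mul_add, mul_add, ← mul_assoc, mul_one_div_cancel hη.ne', one_mul]
    linarith
  exact le_of_mul_le_mul_left hscaled hη

/-- Single-time-step regret bound: for bounded losses `0 ≤ ℓ(k) ≤ B` and
probability distributions `p`, `q` with `q ≪ p`,
`E_p[ℓ] ≤ E_q[ℓ] + (1/η) KL(q ‖ p) + η B² / 8`. -/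
theorem single_step_regret_bound
    {K : Type*} [Fintype K] [Nonempty K]
    (η B : ℝ) (hη : 0 < η) (hB : 0 ≤ B)
    (ℓ : K → ℝ) (hℓ : ∀ k, 0 ≤ ℓ k ∧ ℓ k ≤ B)
    (p q : K → ℝ)
    (hp_nonneg : ∀ k, 0 ≤ p k) (hp_sum : ∑ k, p k = 1)
    (hq_nonneg : ∀ k, 0 ≤ q k) (hq_sum : ∑ k, q k = 1)
    (habs : ∀ k, 0 < q k → 0 < p k) :
    (∑ k, p k * ℓ k)
      ≤ (∑ k, q k * ℓ k) + (1 / η) * (∑ k, q k * Real.log (q k / p k))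
        + η * B ^ 2 / 8 :=
  single_step_regret_bound_general η B hη ℓ hℓ p q hp_nonneg hp_sum hq_nonneg hq_sum habs
end
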